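/- arXiv:1801.04126 — 5 statements merged into one kernel-verified Lean document; each statement's English description precedes it below -/
import Mathlib

section
/- Let (M,d₁) be a locally compact, complete metric space and let F ⊆ M be a closed set that has at worst polynomial outward cusps with respect to d₁. Let d₂ be another metric on M inducing the same topology which is locally bi-Hölder equivalent to d₁, i.e. for every compact set N ⊆ M there exist constants C ≥ 1 and 0 < α ≤ 1 such that C⁻¹·d₁(a,b)^{1/α} ≤ d₂(a,b) ≤ C·d₁(a,b)^α for all a,b ∈ N. Then F has at worst polynomial outward cusps with respect to d₂. -/
open Set Metric

/-- A closed set `F` in a topological space, equipped with a distance function `d`, has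
at worst polynomial outward cusps (with respect to `d`): for every compact `K` there are
`ε₀, ρ > 0` and `r ≥ 1` such that for every `z ∈ K ∩ ∂F` and `0 < ε < ε₀` there is `x ∈ F`
with `d x z < ε` such that every `y` with `d x y < ρ * ε ^ r` lies in `F` and `d z y < ε`. -/
def HasPolyOutwardCusps {M : Type*} [TopologicalSpace M] (d : M → M → ℝ) (F : Set M) : Prop :=
  ∀ K : Set M, IsCompact K → ∃ ε₀ ρ r : ℝ, 0 < ε₀ ∧ 0 < ρ ∧ 1 ≤ r ∧
    ∀ z ∈ K ∩ frontier F, ∀ ε : ℝ, 0 < ε → ε < ε₀ →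
      ∃ x ∈ F, d x z < ε ∧ ∀ y : M, d x y < ρ * ε ^ r → y ∈ F ∧ d z y < ε


lemma exists_unif_eta {M : Type*} [MetricSpace M]
    (d₂ : M → M → ℝ)
    (h2symm : ∀ x y, d₂ x y = d₂ y x)
    (h2tri : ∀ x y z, d₂ x z ≤ d₂ x y + d₂ y z)
    (h2top : ∀ x : M, (nhds x).HasBasis (fun ε : ℝ => 0 < ε) (fun ε => {y | d₂ x y < ε}))
    {N K₁ : Set M} (hK₁ : IsCompact K₁) (hK₁N : K₁ ⊆ N)
    {C α : ℝ} (hC : 0 < C) (hα : 0 < α)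
    (hub : ∀ a ∈ N, ∀ b ∈ N, d₂ a b ≤ C * dist a b ^ α)
    {δ' : ℝ} (hδ' : 0 < δ') :
    ∃ η : ℝ, 0 < η ∧ ∀ x ∈ K₁, ∀ y, d₂ x y < η → dist x y < δ' := by
  have hch : ∀ p : K₁, ∃ η : ℝ, 0 < η ∧ ∀ y, d₂ (p : M) y < η → dist (p : M) y < δ' / 2 := by
    intro p
    obtain ⟨η, hη, hsub⟩ := (h2top (p : M)).mem_iff.mp
      (ball_mem_nhds (p : M) (by positivity : (0:ℝ) < δ' / 2))
    exact ⟨η, hη, fun y hy => by simpa [dist_comm] using hsub hy⟩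
  choose η hηpos hη using hch
  -- radii s p
  set s : K₁ → ℝ := fun p => min (δ' / 4) ((η p / (2 * C)) ^ (1 / α) / 2) with hs
  have hspos : ∀ p, 0 < s p := by
    intro p
    have h0 := hηpos p
    apply lt_min (by positivity)
    have : (0:ℝ) < (η p / (2 * C)) ^ (1 / α) := Real.rpow_pos_of_pos (by positivity) _
    positivity
  have hkey : ∀ p, C * s p ^ α < η p / 2 := by
    intro p
    have h0 := hηpos p
    have hw : (0:ℝ) < (η p / (2 * C)) ^ (1 / α) := Real.rpow_pos_of_pos (by positivity) _
    have h1 : s p < (η p / (2 * C)) ^ (1 / α) :=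
      lt_of_le_of_lt (min_le_right _ _) (by linarith)
    have h2 : s p ^ α < ((η p / (2 * C)) ^ (1 / α)) ^ α :=
      Real.rpow_lt_rpow (le_of_lt (hspos p)) h1 hα
    rw [← Real.rpow_mul (by positivity : (0:ℝ) ≤ η p / (2*C)), one_div, inv_mul_cancel₀ (ne_of_gt hα),
      Real.rpow_one] at h2
    calc C * s p ^ α < C * (η p / (2 * C)) := by
          exact (mul_lt_mul_iff_right₀ hC).mpr h2
      _ = η p / 2 := by field_simp
  have hcover : K₁ ⊆ ⋃ p : K₁, ball (p : M) (s p) := by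
    intro x hx
    exact mem_iUnion.mpr ⟨⟨x, hx⟩, mem_ball_self (hspos _)⟩
  obtain ⟨t, ht⟩ := hK₁.elim_finite_subcover (fun p : K₁ => ball (p : M) (s p))
    (fun p => isOpen_ball) hcover
  rcases t.eq_empty_or_nonempty with rfl | hne
  · refine ⟨1, one_pos, fun x hx y _ => ?_⟩
    simpa using ht hx
  · refine ⟨t.inf' hne (fun p => η p / 2), ?_, ?_⟩
    · exact (Finset.lt_inf'_iff hne).mpr (fun p _ => by have := hηpos p; linarith)
    · intro x hx y hxy
      obtain ⟨p, hpt, hxp⟩ := mem_iUnion₂.mp (ht hx)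
      rw [mem_ball] at hxp
      have hpx : dist (p : M) x < s p := by rwa [dist_comm]
      have hd2px : d₂ (p : M) x < η p / 2 := by
        calc d₂ (p : M) x ≤ C * dist (p : M) x ^ α := hub _ (hK₁N p.2) _ (hK₁N hx)
          _ ≤ C * s p ^ α := by
              apply mul_le_mul_of_nonneg_left _ hC.le
              exact Real.rpow_le_rpow dist_nonneg hpx.le hα.le
          _ < η p / 2 := hkey p
      have hinf : t.inf' hne (fun p => η p / 2) ≤ η p / 2 := Finset.inf'_le _ hpt
      have hd2py : d₂ (p : M) y < η p := by
        have := h2tri (p : M) x y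
        linarith
      have hpy : dist (p : M) y < δ' / 2 := hη p y hd2py
      have hsp : s p ≤ δ' / 4 := min_le_left _ _
      calc dist x y ≤ dist x (p : M) + dist (p : M) y := dist_triangle _ _ _
        _ < δ' := by rw [dist_comm]; linarith


/-- Transfer of the "at worst polynomial outward cusps" property between locally bi-Hölder
equivalent metrics on a locally compact, complete metric space. -/
theorem polyOutwardCusps_transfer_locally_biHolder
    {M : Type*} [MetricSpace M] [LocallyCompactSpace M] [CompleteSpace M]
    (F : Set M) (hF : IsClosed F)
    (h1 : HasPolyOutwardCusps (fun a b => dist a b) F)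
    (d₂ : M → M → ℝ)
    (h2self : ∀ x, d₂ x x = 0)
    (h2eq : ∀ x y, d₂ x y = 0 → x = y)
    (h2symm : ∀ x y, d₂ x y = d₂ y x)
    (h2tri : ∀ x y z, d₂ x z ≤ d₂ x y + d₂ y z)
    (h2top : ∀ x : M, (nhds x).HasBasis (fun ε : ℝ => 0 < ε) (fun ε => {y | d₂ x y < ε}))
    (hHolder : ∀ N : Set M, IsCompact N → ∃ C α : ℝ, 1 ≤ C ∧ 0 < α ∧ α ≤ 1 ∧
      ∀ a ∈ N, ∀ b ∈ N,
        C⁻¹ * dist a b ^ (1 / α) ≤ d₂ a b ∧ d₂ a b ≤ C * dist a b ^ α) :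
    HasPolyOutwardCusps d₂ F := by
  intro K hK
  obtain ⟨N, hN, hKN⟩ := exists_compact_superset hK
  obtain ⟨δ, hδ, hδN⟩ := hK.exists_thickening_subset_open isOpen_interior hKN
  obtain ⟨ε₀₁, ρ₁, r₁, hε₀₁, hρ₁, hr₁, H1⟩ := h1 N hN
  obtain ⟨C, α, hC, hα, hα1, hH⟩ := hHolder N hN
  have hC0 : (0:ℝ) < C := lt_of_lt_of_le one_pos hC
  have hβ : (0:ℝ) < 1/α := by positivity
  have hβ1 : (1:ℝ) ≤ 1/α := by rw [le_div_iff₀ hα]; linarith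
  have hthN : thickening δ K ⊆ N := hδN.trans interior_subset
  have hK₁sub : cthickening (δ/2) K ⊆ N :=
    (cthickening_subset_thickening' hδ (by linarith) K).trans hthN
  have hK₁c : IsCompact (cthickening (δ/2) K) :=
    hN.of_isClosed_subset isClosed_cthickening hK₁sub
  obtain ⟨η, hη, Hη⟩ := exists_unif_eta d₂ h2symm h2tri h2top hK₁c hK₁sub hC0 hα
    (fun a ha b hb => (hH a ha b hb).2) (half_pos hδ)
  set m : ℝ := min ε₀₁ (δ/2) with hm
  have hm0 : 0 < m := lt_min hε₀₁ (half_pos hδ)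
  set r₂ : ℝ := r₁ * (1/α) * (1/α) with hr₂def
  have hr₂1 : 1 ≤ r₂ := by
    calc (1:ℝ) = 1*1*1 := by ring
      _ ≤ r₁ * (1/α) * (1/α) := by
          apply mul_le_mul (mul_le_mul hr₁ hβ1 zero_le_one (by linarith)) hβ1 zero_le_one
          positivity
  have hρ₁β : (0:ℝ) < ρ₁ ^ (1/α) := Real.rpow_pos_of_pos hρ₁ _
  have hCr₂ : (0:ℝ) < C ^ r₂ := Real.rpow_pos_of_pos hC0 _
  set A : ℝ := C⁻¹ * ρ₁ ^ (1/α) * (C ^ r₂)⁻¹ with hAdef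
  have hA0 : 0 < A := by positivity
  set ρ₂ : ℝ := min η A with hρ₂def
  have hρ₂0 : 0 < ρ₂ := lt_min hη hA0
  have hmα : (0:ℝ) < C * m ^ α := by
    have := Real.rpow_pos_of_pos hm0 α
    positivity
  refine ⟨min 1 (C * m ^ α), ρ₂, r₂, lt_min one_pos hmα, hρ₂0, hr₂1, ?_⟩
  intro z hz ε hε hεlt
  have hzN : z ∈ N := interior_subset (hKN hz.1)
  have hε1 : ε < 1 := lt_of_lt_of_le hεlt (min_le_left _ _)
  have hεC : ε < C * m ^ α := lt_of_lt_of_le hεlt (min_le_right _ _)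
  set ε' : ℝ := (ε / C) ^ (1/α) with hε'def
  have hε'0 : 0 < ε' := Real.rpow_pos_of_pos (by positivity) _
  have hε'm : ε' < m := by
    have h1 : ε / C < m ^ α := (div_lt_iff₀ hC0).mpr (by linarith [mul_comm C (m ^ α)])
    have h2 : (ε/C) ^ (1/α) < (m ^ α) ^ (1/α) :=
      Real.rpow_lt_rpow (by positivity) h1 hβ
    rwa [← Real.rpow_mul hm0.le, mul_one_div, div_self hα.ne', Real.rpow_one] at h2
  have hε'ε₀ : ε' < ε₀₁ := lt_of_lt_of_le hε'm (min_le_left _ _)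
  have hε'δ : ε' ≤ δ/2 := le_of_lt (lt_of_lt_of_le hε'm (min_le_right _ _))
  obtain ⟨x, hxF, hxz, Hx⟩ := H1 z ⟨hzN, hz.2⟩ ε' hε'0 hε'ε₀
  simp only at hxz Hx
  have hxK₁ : x ∈ cthickening (δ/2) K :=
    mem_cthickening_of_dist_le x z (δ/2) K hz.1 (by linarith)
  have hxN : x ∈ N := hK₁sub hxK₁
  have hε'α : ε' ^ α = ε / C := by
    rw [hε'def, ← Real.rpow_mul (by positivity), one_div, inv_mul_cancel₀ hα.ne',
      Real.rpow_one]
  have hd₂xz : d₂ x z < ε := by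
    have h3 : dist x z ^ α < ε / C := hε'α ▸ Real.rpow_lt_rpow dist_nonneg hxz hα
    have h4 := (hH x hxN z hzN).2
    calc d₂ x z ≤ C * dist x z ^ α := h4
      _ < C * (ε / C) := (mul_lt_mul_iff_right₀ hC0).mpr h3
      _ = ε := by field_simp
  refine ⟨x, hxF, hd₂xz, ?_⟩
  intro y hy
  have hεr1 : ε ^ r₂ ≤ 1 := Real.rpow_le_one hε.le hε1.le (by linarith)
  have hρε : ρ₂ * ε ^ r₂ ≤ ρ₂ := mul_le_of_le_one_right hρ₂0.le hεr1
  have hyη : d₂ x y < η := lt_of_lt_of_le hy (hρε.trans (min_le_left _ _))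
  have hxy2 : dist x y < δ/2 := Hη x hxK₁ y hyη
  have hyN : y ∈ N := by
    apply hthN
    apply mem_thickening_iff.mpr ⟨z, hz.1, ?_⟩
    calc dist y z ≤ dist y x + dist x z := dist_triangle _ _ _
      _ < δ := by rw [dist_comm]; linarith
  -- key: dist x y < ρ₁ * ε' ^ r₁
  have hAε : A * ε ^ r₂ = C⁻¹ * (ρ₁ * ε' ^ r₁) ^ (1/α) := by
    have hε'r₁ : ε' ^ r₁ = (ε / C) ^ ((1/α) * r₁) := by
      rw [hε'def, ← Real.rpow_mul (by positivity)]
    have h5 : (ρ₁ * ε' ^ r₁) ^ (1/α)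
        = ρ₁ ^ (1/α) * (ε / C) ^ r₂ := by
      rw [Real.mul_rpow hρ₁.le (by positivity), hε'r₁,
        ← Real.rpow_mul (by positivity : (0:ℝ) ≤ ε / C)]
      congr 1
      rw [hr₂def]; ring
    rw [h5, Real.div_rpow hε.le hC0.le, hAdef]
    field_simp
  have hdxy : dist x y < ρ₁ * ε' ^ r₁ := by
    have hlow := (hH x hxN y hyN).1
    have h6 : C⁻¹ * dist x y ^ (1/α) < C⁻¹ * (ρ₁ * ε' ^ r₁) ^ (1/α) := by
      calc C⁻¹ * dist x y ^ (1/α) ≤ d₂ x y := hlow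
        _ < ρ₂ * ε ^ r₂ := hy
        _ ≤ A * ε ^ r₂ := by
            apply mul_le_mul_of_nonneg_right (min_le_right _ _)
            positivity
        _ = C⁻¹ * (ρ₁ * ε' ^ r₁) ^ (1/α) := hAε
    have h7 : dist x y ^ (1/α) < (ρ₁ * ε' ^ r₁) ^ (1/α) :=
      lt_of_mul_lt_mul_left h6 (by positivity)
    by_contra hc
    push_neg at hc
    exact absurd (Real.rpow_le_rpow (by positivity) hc hβ.le) (not_le.mpr h7)
  obtain ⟨hyF, hzy⟩ := Hx y hdxy
  refine ⟨hyF, ?_⟩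
  have h8 : dist z y ^ α < ε / C := hε'α ▸ Real.rpow_lt_rpow dist_nonneg hzy hα
  calc d₂ z y ≤ C * dist z y ^ α := (hH z hzN y hyN).2
    _ < C * (ε / C) := (mul_lt_mul_iff_right₀ hC0).mpr h8
    _ = ε := by field_simp
end

section
/- Let (M,d₁) be a locally compact metric space (not assumed complete) and let F ⊆ M be a closed set that has at worst polynomial outward cusps with respect to d₁. Let d₂ be another metric on M inducing the same topology which is uniformly bi-Hölder equivalent to d₁, i.e. there exist constants C ≥ 1 and 0 < α ≤ 1 such that C⁻¹·d₁(a,b)^{1/α} ≤ d₂(a,b) ≤ C·d₁(a,b)^α for all a,b ∈ M. Then F has at worst polynomial outward cusps with respect to d₂. -/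
open Set Metric

lemma polyCusps_key (C α ρ r ε : ℝ) (hC : 0 < C) (hα : 0 < α) (hρ : 0 < ρ) (hε : 0 < ε) :
    (C * (ρ ^ (1/α) / C ^ (1 + r/(α*α))) * ε ^ (r/(α*α))) ^ α
      = ρ * ((ε/C) ^ (1/α)) ^ r := by
  have hρa : (0:ℝ) < ρ ^ (1/α) := Real.rpow_pos_of_pos hρ _
  have hCa : (0:ℝ) < C ^ (1 + r/(α*α)) := Real.rpow_pos_of_pos hC _
  have hεa : (0:ℝ) < ε ^ (r/(α*α)) := Real.rpow_pos_of_pos hε _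
  have hεC : (0:ℝ) < ε / C := div_pos hε hC
  have hεCa : (0:ℝ) < (ε/C) ^ (1/α) := Real.rpow_pos_of_pos hεC _
  have hbase : (0:ℝ) < C * (ρ ^ (1/α) / C ^ (1 + r/(α*α))) * ε ^ (r/(α*α)) := by positivity
  have hL : (0:ℝ) < (C * (ρ ^ (1/α) / C ^ (1 + r/(α*α))) * ε ^ (r/(α*α))) ^ α :=
    Real.rpow_pos_of_pos hbase _
  have hR : (0:ℝ) < ρ * ((ε/C) ^ (1/α)) ^ r := by positivity
  refine Real.log_injOn_pos (Set.mem_Ioi.2 hL) (Set.mem_Ioi.2 hR) ?_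
  rw [Real.log_rpow hbase, Real.log_mul (by positivity) (ne_of_gt hεa),
    Real.log_mul (ne_of_gt hC) (by positivity), Real.log_div (ne_of_gt hρa) (ne_of_gt hCa),
    Real.log_rpow hρ, Real.log_rpow hC, Real.log_rpow hε,
    Real.log_mul (ne_of_gt hρ) (by positivity), Real.log_rpow hεCa, Real.log_rpow hεC,
    Real.log_div (ne_of_gt hε) (ne_of_gt hC)]
  field_simp
  ring

/-- Transfer of the "at worst polynomial outward cusps" property between uniformly bi-Hölder
equivalent metrics on a locally compact metric space (completeness not assumed). -/
theorem polyOutwardCusps_transfer_uniformly_biHolder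
    {M : Type*} [MetricSpace M] [LocallyCompactSpace M]
    (F : Set M) (hF : IsClosed F)
    (h1 : HasPolyOutwardCusps (fun a b => dist a b) F)
    (d₂ : M → M → ℝ)
    (h2self : ∀ x, d₂ x x = 0)
    (h2eq : ∀ x y, d₂ x y = 0 → x = y)
    (h2symm : ∀ x y, d₂ x y = d₂ y x)
    (h2tri : ∀ x y z, d₂ x z ≤ d₂ x y + d₂ y z)
    (h2top : ∀ x : M, (nhds x).HasBasis (fun ε : ℝ => 0 < ε) (fun ε => {y | d₂ x y < ε}))
    (hHolder : ∃ C α : ℝ, 1 ≤ C ∧ 0 < α ∧ α ≤ 1 ∧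
      ∀ a b : M, C⁻¹ * dist a b ^ (1 / α) ≤ d₂ a b ∧ d₂ a b ≤ C * dist a b ^ α) :
    HasPolyOutwardCusps d₂ F := by
  obtain ⟨C, α, hC, hα, hα1, hCab⟩ := hHolder
  have hC0 : (0:ℝ) < C := lt_of_lt_of_le one_pos hC
  intro K hK
  obtain ⟨ε₀, ρ, r, hε₀, hρ, hr, H⟩ := h1 K hK
  refine ⟨C * ε₀ ^ α, ρ ^ (1/α) / C ^ (1 + r/(α*α)), r/(α*α), by positivity,
    by positivity, ?_, ?_⟩
  · -- 1 ≤ r/(α*α)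
    have hαα : α * α ≤ 1 := by nlinarith
    have : r ≤ r / (α*α) := by
      rw [le_div_iff₀ (by positivity)]
      nlinarith
    linarith
  intro z hz ε hεpos hεlt
  -- translate scale
  set ε₁ : ℝ := (ε/C) ^ (1/α) with hε₁def
  have hεC : (0:ℝ) < ε/C := div_pos hεpos hC0
  have hε₁pos : 0 < ε₁ := Real.rpow_pos_of_pos hεC _
  have hε₁lt : ε₁ < ε₀ := by
    have h1' : ε/C < ε₀ ^ α := by
      rw [div_lt_iff₀ hC0]
      calc ε < C * ε₀ ^ α := hεlt
        _ = ε₀ ^ α * C := mul_comm _ _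
    calc ε₁ = (ε/C) ^ (1/α) := rfl
      _ < (ε₀ ^ α) ^ (1/α) := Real.rpow_lt_rpow (le_of_lt hεC) h1' (by positivity)
      _ = ε₀ ^ (α * (1/α)) := (Real.rpow_mul (le_of_lt hε₀) _ _).symm
      _ = ε₀ := by rw [mul_one_div_cancel (ne_of_gt hα), Real.rpow_one]
  obtain ⟨x, hxF, hxz, hball⟩ := H z hz ε₁ hε₁pos hε₁lt
  -- key conversion: dist a b < ε₁ → d₂ a b < ε
  have conv : ∀ a b : M, dist a b < ε₁ → d₂ a b < ε := by
    intro a b hab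
    have h2 := (hCab a b).2
    calc d₂ a b ≤ C * dist a b ^ α := h2
      _ < C * ε₁ ^ α := by
          apply mul_lt_mul_of_pos_left _ hC0
          exact Real.rpow_lt_rpow dist_nonneg hab hα
      _ = C * (ε/C) := by
          rw [hε₁def, ← Real.rpow_mul (le_of_lt hεC),
            one_div_mul_cancel (ne_of_gt hα), Real.rpow_one]
      _ = ε := by field_simp
  refine ⟨x, hxF, conv x z hxz, ?_⟩
  intro y hy
  -- show dist x y < ρ * ε₁ ^ r
  have hd₂nonneg : 0 ≤ d₂ x y := by
    have := (hCab x y).1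
    have h0 : (0:ℝ) ≤ C⁻¹ * dist x y ^ (1/α) := by positivity
    linarith
  have hdist : dist x y < ρ * ε₁ ^ r := by
    have h1' : dist x y ^ (1/α) ≤ C * d₂ x y := by
      have := (hCab x y).1
      rw [inv_mul_le_iff₀ hC0] at this
      exact this
    have h2' : dist x y ≤ (C * d₂ x y) ^ α := by
      calc dist x y = (dist x y ^ (1/α)) ^ α := by
            rw [← Real.rpow_mul dist_nonneg, one_div_mul_cancel (ne_of_gt hα),
              Real.rpow_one]
        _ ≤ (C * d₂ x y) ^ α := Real.rpow_le_rpow (by positivity) h1' (le_of_lt hα)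
    have h3' : (C * d₂ x y) ^ α <
        (C * (ρ ^ (1/α) / C ^ (1 + r/(α*α))) * ε ^ (r/(α*α))) ^ α := by
      apply Real.rpow_lt_rpow (by positivity) _ hα
      rw [mul_assoc]
      exact mul_lt_mul_of_pos_left hy hC0
    have hkey := polyCusps_key C α ρ r ε hC0 hα hρ hεpos
    calc dist x y ≤ (C * d₂ x y) ^ α := h2'
      _ < (C * (ρ ^ (1/α) / C ^ (1 + r/(α*α))) * ε ^ (r/(α*α))) ^ α := h3'
      _ = ρ * ε₁ ^ r := hkey
  obtain ⟨hyF, hzy⟩ := hball y hdist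
  exact ⟨hyF, conv z y hzy⟩
end

section
/- Let (M,d₁) be a locally compact, complete metric space and let F ⊆ M be a closed set with interior dense in F which has no narrow fjords with respect to d₁. Let d₂ be another metric on M inducing the same topology which is locally bi-Lipschitz equivalent to d₁, i.e. for every compact set N ⊆ M there exists a constant C ≥ 1 such that C⁻¹·d₁(a,b) ≤ d₂(a,b) ≤ C·d₁(a,b) for all a,b ∈ N. Then F has no narrow fjords with respect to d₂. -/
open Set Metric

/-- The set of sums `∑ d (γ tᵢ) (γ tᵢ₊₁)` over partitions `0 = t₀ ≤ t₁ ≤ ⋯ ≤ tₙ = 1`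
of the unit interval, for a path `γ` and a distance function `d`. -/
def partitionSums {M : Type*} (d : M → M → ℝ) (γ : ℝ → M) : Set ℝ :=
  { L | ∃ (n : ℕ) (t : Fin (n + 1) → ℝ), Monotone t ∧ t 0 = 0 ∧ t (Fin.last n) = 1 ∧
      L = ∑ i : Fin n, d (γ (t i.castSucc)) (γ (t i.succ)) }

/-- The length of the path `γ : [0,1] → M` with respect to the distance `d`:
the total variation, i.e. the supremum of the sums over partitions of `[0,1]`. -/
noncomputable def pathLength {M : Type*} (d : M → M → ℝ) (γ : ℝ → M) : ℝ :=
  sSup (partitionSums d γ)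

/-- A path is rectifiable w.r.t. `d` if its partition sums are bounded above,
i.e. its total variation is finite. -/
def IsRectifiable {M : Type*} (d : M → M → ℝ) (γ : ℝ → M) : Prop :=
  BddAbove (partitionSums d γ)

/-- A closed set `F` (with dense interior) in a topological space equipped with a distance
function `d` has no narrow fjords: every `x ∈ F` has a compact neighborhood `K` in `F`,
an integer `p ≥ 1` and a constant `D > 0` such that any two points `y, z ∈ K` can be joined
by a rectifiable path in `F` lying in the interior of `F` except possibly at finitely many
points, with `d y z ≥ D * (length γ)^p`. -/
def NoNarrowFjords {M : Type*} [TopologicalSpace M] (d : M → M → ℝ) (F : Set M) : Prop :=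
  ∀ x ∈ F, ∃ (p : ℕ) (K : Set M) (D : ℝ), 1 ≤ p ∧ IsCompact K ∧ K ⊆ F ∧
    K ∈ nhdsWithin x F ∧ 0 < D ∧
    ∀ y ∈ K, ∀ z ∈ K, ∃ γ : ℝ → M,
      ContinuousOn γ (Icc (0 : ℝ) 1) ∧ γ 0 = y ∧ γ 1 = z ∧
      (∀ t ∈ Icc (0 : ℝ) 1, γ t ∈ F) ∧
      IsRectifiable d γ ∧
      (∃ S : Finset M, ∀ t ∈ Icc (0 : ℝ) 1, γ t ∉ S → γ t ∈ interior F) ∧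
      d y z ≥ D * pathLength d γ ^ p

/-! Let `K` be the compact neighbourhood of `x` given for `dist`, and `N` a compact set with
`K ⊆ interior N`, so that the `ε`-thickening of `K` lies in `N` for some `ε > 0`. For `y, z ∈ K`
with `dist y z < D ε ^ p`, the fjord inequality `D ℓ₁ ^ p ≤ dist y z` forces the `dist`-length `ℓ₁`
of the connecting path below `ε`, so the path stays in `N`, where `d₂ ≤ C dist` and
`dist ≤ C d₂`. Hence `ℓ₂ ≤ C ℓ₁` and `d₂ y z ≥ C⁻¹ dist y z ≥ C⁻¹ D ℓ₁ ^ p ≥ D C⁻¹ ^ (p + 1) ℓ₂ ^ p`.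
-/

section PathLength

variable {M : Type*} {γ : ℝ → M}

lemma partition_mem_Icc {n : ℕ} {t : Fin (n + 1) → ℝ} (hm : Monotone t)
    (h0 : t 0 = 0) (h1 : t (Fin.last n) = 1) (i : Fin (n + 1)) : t i ∈ Icc (0 : ℝ) 1 :=
  ⟨h0 ▸ hm (Fin.zero_le i), h1 ▸ hm (Fin.le_last i)⟩

lemma apply_zero_one_mem_partitionSums (d : M → M → ℝ) (γ : ℝ → M) :
    d (γ 0) (γ 1) ∈ partitionSums d γ := by
  refine ⟨1, ![0, 1], ?_, rfl, rfl, by simp⟩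
  intro i j hij
  fin_cases i <;> fin_cases j <;> simp_all

lemma add_mem_partitionSums (d : M → M → ℝ) (γ : ℝ → M) {s : ℝ} (hs : s ∈ Icc (0 : ℝ) 1) :
    d (γ 0) (γ s) + d (γ s) (γ 1) ∈ partitionSums d γ := by
  refine ⟨2, ![0, s, 1], ?_, rfl, rfl, by simp [Fin.sum_univ_two]⟩
  intro i j hij
  fin_cases i <;> fin_cases j <;> simp_all [hs.1, hs.2]

lemma IsRectifiable.le_pathLength {d : M → M → ℝ} (hγ : IsRectifiable d γ) :
    d (γ 0) (γ 1) ≤ pathLength d γ :=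
  le_csSup hγ (apply_zero_one_mem_partitionSums d γ)

lemma IsRectifiable.dist_le_pathLength [PseudoMetricSpace M]
    (hγ : IsRectifiable (fun a b => dist a b) γ) {s : ℝ} (hs : s ∈ Icc (0 : ℝ) 1) :
    dist (γ 0) (γ s) ≤ pathLength (fun a b => dist a b) γ :=
  (le_add_of_nonneg_right dist_nonneg).trans (le_csSup hγ (add_mem_partitionSums _ γ hs))

lemma IsRectifiable.mapsTo_thickening [PseudoMetricSpace M]
    (hγ : IsRectifiable (fun a b => dist a b) γ) {K : Set M} (h0 : γ 0 ∈ K) {ε : ℝ}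
    (hε : pathLength (fun a b => dist a b) γ < ε) :
    MapsTo γ (Icc 0 1) (thickening ε K) := fun _ hs =>
  mem_thickening_iff.2 ⟨γ 0, h0, by rw [dist_comm]; exact (hγ.dist_le_pathLength hs).trans_lt hε⟩

variable {d₁ d₂ : M → M → ℝ} {C : ℝ}

lemma partitionSums_le_mul (hC : 0 ≤ C) (hγ : IsRectifiable d₁ γ)
    (hd : ∀ s ∈ Icc (0 : ℝ) 1, ∀ u ∈ Icc (0 : ℝ) 1, d₂ (γ s) (γ u) ≤ C * d₁ (γ s) (γ u)) :
    ∀ L ∈ partitionSums d₂ γ, L ≤ C * pathLength d₁ γ := by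
  rintro L ⟨n, t, hmono, h0, h1, rfl⟩
  have ht := partition_mem_Icc hmono h0 h1
  calc ∑ i : Fin n, d₂ (γ (t i.castSucc)) (γ (t i.succ))
      ≤ ∑ i : Fin n, C * d₁ (γ (t i.castSucc)) (γ (t i.succ)) :=
        Finset.sum_le_sum fun i _ => hd _ (ht _) _ (ht _)
    _ = C * ∑ i : Fin n, d₁ (γ (t i.castSucc)) (γ (t i.succ)) := by rw [Finset.mul_sum]
    _ ≤ C * pathLength d₁ γ :=
        mul_le_mul_of_nonneg_left (le_csSup hγ ⟨n, t, hmono, h0, h1, rfl⟩) hC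

lemma IsRectifiable.of_le_mul (hC : 0 ≤ C) (hγ : IsRectifiable d₁ γ)
    (hd : ∀ s ∈ Icc (0 : ℝ) 1, ∀ u ∈ Icc (0 : ℝ) 1, d₂ (γ s) (γ u) ≤ C * d₁ (γ s) (γ u)) :
    IsRectifiable d₂ γ :=
  ⟨_, partitionSums_le_mul hC hγ hd⟩

lemma pathLength_le_mul (hC : 0 ≤ C) (hγ : IsRectifiable d₁ γ)
    (hd : ∀ s ∈ Icc (0 : ℝ) 1, ∀ u ∈ Icc (0 : ℝ) 1, d₂ (γ s) (γ u) ≤ C * d₁ (γ s) (γ u)) :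
    pathLength d₂ γ ≤ C * pathLength d₁ γ :=
  csSup_le ⟨_, apply_zero_one_mem_partitionSums d₂ γ⟩ (partitionSums_le_mul hC hγ hd)

end PathLength

lemma mul_inv_pow_succ_mul_pow_le {C D ℓ₁ ℓ₂ a b : ℝ} (p : ℕ) (hC : 0 < C) (hD : 0 ≤ D)
    (hℓ₂ : 0 ≤ ℓ₂) (hℓ : ℓ₂ ≤ C * ℓ₁) (ha : D * ℓ₁ ^ p ≤ a) (hb : C⁻¹ * a ≤ b) :
    D * C⁻¹ ^ (p + 1) * ℓ₂ ^ p ≤ b :=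
  calc D * C⁻¹ ^ (p + 1) * ℓ₂ ^ p
      ≤ D * C⁻¹ ^ (p + 1) * (C * ℓ₁) ^ p := by gcongr
    _ = C⁻¹ * (D * ℓ₁ ^ p) := by rw [mul_pow, pow_succ, inv_pow]; field_simp
    _ ≤ C⁻¹ * a := by gcongr
    _ ≤ b := hb

theorem noNarrowFjords_transfer_locally_biLipschitz_general
    {M : Type*} [MetricSpace M] [LocallyCompactSpace M]
    (F : Set M)
    (h1 : NoNarrowFjords (fun a b => dist a b) F)
    (d₂ : M → M → ℝ)
    (hLip : ∀ N : Set M, IsCompact N → ∃ C : ℝ, 1 ≤ C ∧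
      ∀ a ∈ N, ∀ b ∈ N, C⁻¹ * dist a b ≤ d₂ a b ∧ d₂ a b ≤ C * dist a b) :
    NoNarrowFjords d₂ F := by
  intro x hx
  obtain ⟨p, K, D, hp, hK, hKF, hKx, hD, hpath⟩ := h1 x hx
  obtain ⟨N, hN, hKN⟩ := exists_compact_superset hK
  obtain ⟨ε, hε, hKεN⟩ := hK.exists_thickening_subset_open isOpen_interior hKN
  obtain ⟨C, hC1, hC⟩ := hLip N hN
  have hC0 : 0 < C := one_pos.trans_le hC1
  refine ⟨p, K ∩ closedBall x (D * ε ^ p / 4), D * C⁻¹ ^ (p + 1), hp,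
    hK.inter_right isClosed_closedBall, inter_subset_left.trans hKF,
    Filter.inter_mem hKx (nhdsWithin_le_nhds (closedBall_mem_nhds x (by positivity))),
    by positivity, ?_⟩
  rintro y ⟨hyK, hyx⟩ z ⟨hzK, hzx⟩
  obtain ⟨γ, hγc, rfl, rfl, hγF, hγ, hS, hlen⟩ := hpath _ hyK _ hzK
  have hlen_lt : pathLength (fun a b => dist a b) γ < ε := by
    refine lt_of_pow_lt_pow_left₀ p hε.le (lt_of_mul_lt_mul_left ?_ hD.le)
    calc D * pathLength (fun a b => dist a b) γ ^ p ≤ dist (γ 0) (γ 1) := hlen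
      _ ≤ dist (γ 0) x + dist (γ 1) x := dist_triangle_right _ _ _
      _ ≤ D * ε ^ p / 4 + D * ε ^ p / 4 := add_le_add hyx hzx
      _ < D * ε ^ p := by linarith [show 0 < D * ε ^ p by positivity]
  have hγN : MapsTo γ (Icc 0 1) N := fun _ ht =>
    interior_subset (hKεN (hγ.mapsTo_thickening hyK hlen_lt ht))
  have hd : ∀ s ∈ Icc (0 : ℝ) 1, ∀ u ∈ Icc (0 : ℝ) 1, d₂ (γ s) (γ u) ≤ C * dist (γ s) (γ u) :=
    fun s hs u hu => (hC _ (hγN hs) _ (hγN hu)).2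
  have hγ₂ := hγ.of_le_mul hC0.le hd
  have hlow := (hC _ (hγN ⟨le_rfl, zero_le_one⟩) _ (hγN ⟨zero_le_one, le_rfl⟩)).1
  refine ⟨γ, hγc, rfl, rfl, hγF, hγ₂, hS, mul_inv_pow_succ_mul_pow_le p hC0 hD.le ?_
    (pathLength_le_mul hC0.le hγ hd) hlen hlow⟩
  exact (mul_nonneg (inv_nonneg.2 hC0.le) dist_nonneg).trans (hlow.trans hγ₂.le_pathLength)

/-- Transfer of the "no narrow fjords" property between locally bi-Lipschitz equivalent
metrics on a locally compact, complete metric space. -/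
theorem noNarrowFjords_transfer_locally_biLipschitz
    {M : Type*} [MetricSpace M] [LocallyCompactSpace M] [CompleteSpace M]
    (F : Set M) (hF : IsClosed F) (hreg : F ⊆ closure (interior F))
    (h1 : NoNarrowFjords (fun a b => dist a b) F)
    (d₂ : M → M → ℝ)
    (h2self : ∀ x, d₂ x x = 0)
    (h2eq : ∀ x y, d₂ x y = 0 → x = y)
    (h2symm : ∀ x y, d₂ x y = d₂ y x)
    (h2tri : ∀ x y z, d₂ x z ≤ d₂ x y + d₂ y z)
    (h2top : ∀ x : M, (nhds x).HasBasis (fun ε : ℝ => 0 < ε) (fun ε => {y | d₂ x y < ε}))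
    (hLip : ∀ N : Set M, IsCompact N → ∃ C : ℝ, 1 ≤ C ∧
      ∀ a ∈ N, ∀ b ∈ N, C⁻¹ * dist a b ≤ d₂ a b ∧ d₂ a b ≤ C * dist a b) :
    NoNarrowFjords d₂ F :=
  noNarrowFjords_transfer_locally_biLipschitz_general F h1 d₂ hLip
end

section
/- Let K ⊆ ℝⁿ be a compact convex set with nonempty interior. Then K has no narrow fjords with respect to the Euclidean metric; in fact the condition holds with exponent p = 1: there exists a constant D > 0 such that any two points y,z ∈ K can be joined by a rectifiable path γ : [0,1] → K with γ(0) = y, γ(1) = z whose image lies in the interior of K except possibly for the two endpoints, and whose Euclidean length satisfies ‖y − z‖ ≥ D·ℓ(γ). -/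
/-!
Fix an interior point `c` of `K` and a radius `R` with `K ⊆ closedBall c R`. The path from `y`
to `z` is the segment `[y, z]` pushed towards `c` with weight `s t (1 - t)`, `s = ‖y - z‖ / R`.
The weight vanishes only at the endpoints, so the rest of the path lies in the interior of `K`;
and since it is proportional to `‖y - z‖`, the path is `2‖y - z‖`-Lipschitz on `[0, 1]`,
which bounds its length by `2‖y - z‖`.
-/

open Set Metric

open AffineMap

theorem Fin.sum_succ_sub_castSucc {G : Type*} [AddCommGroup G] {n : ℕ} (t : Fin (n + 1) → G) :
    ∑ i : Fin n, (t i.succ - t i.castSucc) = t (Fin.last n) - t 0 := by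
  induction n with
  | zero => simp
  | succ n ih =>
    have := ih (t ∘ Fin.castSucc)
    simp only [Function.comp_apply, Fin.castSucc_zero] at this
    rw [Fin.sum_univ_castSucc]
    simp only [Fin.succ_castSucc, this, Fin.succ_last]
    abel

section Length

variable {M : Type*} [PseudoMetricSpace M] {γ : ℝ → M} {L : NNReal}

theorem LipschitzOnWith.mem_upperBounds_partitionSums (hγ : LipschitzOnWith L γ (Icc 0 1)) :
    (L : ℝ) ∈ upperBounds (partitionSums (fun a b => dist a b) γ) := by
  rintro _ ⟨n, t, ht, ht0, ht1, rfl⟩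
  have ht_mem : ∀ i, t i ∈ Icc (0 : ℝ) 1 := fun i =>
    ⟨ht0 ▸ ht (Fin.zero_le i), ht1 ▸ ht (Fin.le_last i)⟩
  calc ∑ i : Fin n, dist (γ (t i.castSucc)) (γ (t i.succ))
      ≤ ∑ i : Fin n, L * (t i.succ - t i.castSucc) := by
        gcongr with i
        rw [← abs_of_nonneg (sub_nonneg.2 (ht i.castSucc_lt_succ.le)), ← Real.dist_eq, dist_comm]
        exact hγ.dist_le_mul _ (ht_mem _) _ (ht_mem _)
    _ = L := by rw [← Finset.mul_sum, Fin.sum_succ_sub_castSucc, ht0, ht1, sub_zero, mul_one]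

theorem LipschitzOnWith.isRectifiable (hγ : LipschitzOnWith L γ (Icc 0 1)) :
    IsRectifiable (fun a b => dist a b) γ :=
  ⟨L, hγ.mem_upperBounds_partitionSums⟩

theorem LipschitzOnWith.pathLength_le (hγ : LipschitzOnWith L γ (Icc 0 1)) :
    pathLength (fun a b => dist a b) γ ≤ L :=
  Real.sSup_le (fun _ hx => hγ.mem_upperBounds_partitionSums hx) L.2

end Length

theorem mul_mul_one_sub_mem_Icc {s t : ℝ} (hs₀ : 0 ≤ s) (hs₄ : s ≤ 4) (ht : t ∈ Icc (0 : ℝ) 1) :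
    s * t * (1 - t) ∈ Icc (0 : ℝ) 1 := by
  obtain ⟨ht₀, ht₁⟩ := ht
  constructor
  · have := sub_nonneg.2 ht₁
    positivity
  · nlinarith [sq_nonneg (2 * t - 1), mul_nonneg ht₀ (sub_nonneg.2 ht₁)]

theorem abs_mul_mul_one_sub_sub_le {s a b : ℝ} (hs : 0 ≤ s) (ha : a ∈ Icc (0 : ℝ) 1)
    (hb : b ∈ Icc (0 : ℝ) 1) : |s * b * (1 - b) - s * a * (1 - a)| ≤ s * dist a b := by
  have h : |1 - a - b| ≤ 1 := abs_le.2 ⟨by linarith [ha.2, hb.2], by linarith [ha.1, hb.1]⟩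
  calc |s * b * (1 - b) - s * a * (1 - a)| = s * dist a b * |1 - a - b| := by
        rw [Real.dist_eq, abs_sub_comm, ← abs_of_nonneg hs, ← abs_mul, ← abs_mul, abs_of_nonneg hs]
        ring_nf
    _ ≤ s * dist a b := mul_le_of_le_one_right (by positivity) h

section BumpedSegment

variable {E : Type*} [NormedAddCommGroup E] [NormedSpace ℝ E] {K : Set E} {c y z : E} {s t : ℝ}

def bumpedSegment (c y z : E) (s t : ℝ) : E :=
  lineMap (lineMap y z t) c (s * t * (1 - t))

@[simp]
theorem bumpedSegment_zero : bumpedSegment c y z s 0 = y := by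
  simp [bumpedSegment]

@[simp]
theorem bumpedSegment_one : bumpedSegment c y z s 1 = z := by
  simp [bumpedSegment]

theorem continuous_bumpedSegment : Continuous (bumpedSegment c y z s) := by
  unfold bumpedSegment
  fun_prop

theorem Convex.bumpedSegment_mem (hK : Convex ℝ K) (hy : y ∈ K) (hz : z ∈ K) (hc : c ∈ K)
    (hs₀ : 0 ≤ s) (hs₄ : s ≤ 4) (ht : t ∈ Icc (0 : ℝ) 1) : bumpedSegment c y z s t ∈ K :=
  hK.lineMap_mem (hK.lineMap_mem hy hz ht) hc (mul_mul_one_sub_mem_Icc hs₀ hs₄ ht)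

theorem Convex.bumpedSegment_mem_interior (hK : Convex ℝ K) (hy : y ∈ K) (hz : z ∈ K)
    (hc : c ∈ interior K) (hs₀ : 0 < s) (hs₄ : s ≤ 4) (ht : t ∈ Ioo (0 : ℝ) 1) :
    bumpedSegment c y z s t ∈ interior K := by
  have hw₀ : 0 < s * t * (1 - t) := mul_pos (mul_pos hs₀ ht.1) (sub_pos.2 ht.2)
  have hw₁ := (mul_mul_one_sub_mem_Icc hs₀.le hs₄ (Ioo_subset_Icc_self ht)).2
  rw [bumpedSegment, lineMap_apply_module]
  exact hK.combo_self_interior_mem_interior (hK.lineMap_mem hy hz (Ioo_subset_Icc_self ht)) hc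
    (sub_nonneg.2 hw₁) hw₀ (by ring)

theorem dist_bumpedSegment_le {R a b : ℝ} (hy : y ∈ closedBall c R) (hz : z ∈ closedBall c R)
    (hs₀ : 0 ≤ s) (hs₄ : s ≤ 4) (ha : a ∈ Icc (0 : ℝ) 1) (hb : b ∈ Icc (0 : ℝ) 1) :
    dist (bumpedSegment c y z s a) (bumpedSegment c y z s b) ≤ (dist y z + s * R) * dist a b := by
  set σ : ℝ → E := fun t => lineMap y z t
  set w : ℝ → ℝ := fun t => s * t * (1 - t)
  have hdiff : bumpedSegment c y z s b - bumpedSegment c y z s a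
      = (1 - w a) • (σ b - σ a) + (w b - w a) • (c - σ b) := by
    simp only [bumpedSegment, σ, w, lineMap_apply_module]
    module
  obtain ⟨hw₀, hw₁⟩ := mul_mul_one_sub_mem_Icc hs₀ hs₄ ha
  have hσb : dist (σ b) c ≤ R := (convex_closedBall c R).lineMap_mem hy hz hb
  calc dist (bumpedSegment c y z s a) (bumpedSegment c y z s b)
      ≤ ‖(1 - w a) • (σ b - σ a)‖ + ‖(w b - w a) • (c - σ b)‖ := by
        rw [dist_comm, dist_eq_norm, hdiff]
        exact norm_add_le _ _
    _ = |1 - w a| * (dist a b * dist y z) + |w b - w a| * dist (σ b) c := by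
        rw [norm_smul, norm_smul, Real.norm_eq_abs, Real.norm_eq_abs, ← dist_eq_norm,
          ← dist_eq_norm, dist_comm c, dist_lineMap_lineMap, dist_comm b]
    _ ≤ 1 * (dist a b * dist y z) + s * dist a b * R := by
        gcongr
        · exact abs_le.2 ⟨by linarith, by linarith⟩
        · exact abs_mul_mul_one_sub_sub_le hs₀ ha hb
    _ = (dist y z + s * R) * dist a b := by ring

end BumpedSegment

/-- A compact convex subset of `ℝⁿ` with nonempty interior has no narrow fjords, with
exponent `p = 1`: there is a constant `D > 0` such that any two points `y, z ∈ K` can be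
joined by a rectifiable path in `K` whose image lies in the interior of `K` except possibly
for the two endpoints, of Euclidean length `ℓ(γ)` satisfying `‖y - z‖ ≥ D * ℓ(γ)`. -/
theorem compact_convex_noNarrowFjords_linear
    {n : ℕ} (K : Set (EuclideanSpace ℝ (Fin n)))
    (hK : IsCompact K) (hconv : Convex ℝ K) (hint : (interior K).Nonempty) :
    ∃ D : ℝ, 0 < D ∧ ∀ y ∈ K, ∀ z ∈ K, ∃ γ : ℝ → EuclideanSpace ℝ (Fin n),
      ContinuousOn γ (Icc (0 : ℝ) 1) ∧ γ 0 = y ∧ γ 1 = z ∧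
      (∀ t ∈ Icc (0 : ℝ) 1, γ t ∈ K) ∧
      IsRectifiable (fun a b => dist a b) γ ∧
      (∀ t ∈ Icc (0 : ℝ) 1, γ t ∈ interior K ∨ γ t = y ∨ γ t = z) ∧
      dist y z ≥ D * pathLength (fun a b => dist a b) γ := by
  obtain ⟨c, hc⟩ := hint
  obtain ⟨R, hR, hKR⟩ := hK.isBounded.subset_closedBall_lt 0 c
  refine ⟨1 / 2, by norm_num, fun y hy z hz => ?_⟩
  set s := dist y z / R
  have hsR : s * R = dist y z := div_mul_cancel₀ _ hR.ne'
  have hs₀ : 0 ≤ s := by positivity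
  have hs₄ : s ≤ 4 := by
    rw [div_le_iff₀ hR]
    linarith [dist_triangle_right y z c, mem_closedBall.1 (hKR hy), mem_closedBall.1 (hKR hz)]
  have hlip : LipschitzOnWith (2 * nndist y z) (bumpedSegment c y z s) (Icc 0 1) :=
    LipschitzOnWith.of_dist_le_mul fun a ha b hb => by
      simpa [hsR, two_mul] using dist_bumpedSegment_le (hKR hy) (hKR hz) hs₀ hs₄ ha hb
  refine ⟨bumpedSegment c y z s, continuous_bumpedSegment.continuousOn, bumpedSegment_zero,
    bumpedSegment_one, fun t ht => hconv.bumpedSegment_mem hy hz (interior_subset hc) hs₀ hs₄ ht,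
    hlip.isRectifiable, fun t ht => ?_, ?_⟩
  · rcases eq_or_ne y z with rfl | hyz
    · simp [s, bumpedSegment]
    rcases ht.1.eq_or_lt with rfl | ht₀
    · simp
    rcases ht.2.eq_or_lt with rfl | ht₁
    · simp
    exact Or.inl <| hconv.bumpedSegment_mem_interior hy hz hc (div_pos (dist_pos.2 hyz) hR) hs₄
      ⟨ht₀, ht₁⟩
  · calc 1 / 2 * pathLength (fun a b => dist a b) (bumpedSegment c y z s)
        ≤ 1 / 2 * (2 * dist y z) := by
          gcongr
          exact_mod_cast hlip.pathLength_le
      _ = dist y z := by ring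
end

section
/- Let E be a real normed vector space and let A, B ⊆ E be locally convex subsets (every point has a convex neighborhood within the set) with dense interior. Let f, g : E → E be maps such that f is infinitely differentiable within A at every point of A, g is infinitely differentiable within B at every point of B, f maps A onto B, g(f(x)) = x for all x ∈ A and f(g(y)) = y for all y ∈ B. Then f maps the interior of A (taken in E) onto the interior of B; equivalently, for every x ∈ A, x lies in the topological boundary of A if and only if f(x) lies in the topological boundary of B. -/
open Set

/-- A convex set with a point in its interior is contained in the closure of its interior. -/
lemma aux_convex_subset_closure_interior {E : Type*} [NormedAddCommGroup E] [NormedSpace ℝ E]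
    {V : Set E} (hV : Convex ℝ V) {z : E} (hz : z ∈ interior V) :
    V ⊆ closure (interior V) := by
  intro v hv
  have htend : Filter.Tendsto (fun t : ℝ => v + t • (z - v)) (nhdsWithin 0 (Ioi 0)) (nhds v) := by
    have : Filter.Tendsto (fun t : ℝ => v + t • (z - v)) (nhds 0) (nhds v) := by
      have h0 : Filter.Tendsto (fun t : ℝ => t • (z - v)) (nhds (0 : ℝ)) (nhds (0 : E)) := by
        simpa using Filter.Tendsto.smul_const (Filter.tendsto_id (x := nhds (0:ℝ))) (z - v)
      simpa using (tendsto_const_nhds.add h0)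
    exact this.mono_left nhdsWithin_le_nhds
  refine mem_closure_of_tendsto htend ?_
  filter_upwards [Ioc_mem_nhdsGT_of_mem (by exact ⟨le_refl (0:ℝ), one_pos⟩ : (0:ℝ) ∈ Ico 0 1)]
    with t ht
  exact hV.add_smul_sub_mem_interior hv hz ht

/-- Key half of the theorem: the image of the interior of `A` is contained in the
interior of `B`. -/
lemma aux_image_interior_subset {E : Type*} [NormedAddCommGroup E] [NormedSpace ℝ E]
    (A B : Set E)
    (hBlc : ∀ y ∈ B, ∃ V : Set E, V ⊆ B ∧ Convex ℝ V ∧ V ∈ nhdsWithin y B)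
    (hBreg : B ⊆ closure (interior B))
    (f g : E → E)
    (hf : ∀ x ∈ A, ContDiffWithinAt ℝ (⊤ : ℕ∞) f A x)
    (hg : ∀ y ∈ B, ContDiffWithinAt ℝ (⊤ : ℕ∞) g B y)
    (hfAB : f '' A = B)
    (hgf : ∀ x ∈ A, g (f x) = x) (hfg : ∀ y ∈ B, f (g y) = y) :
    f '' interior A ⊆ interior B := by
  rintro y ⟨x, hx, rfl⟩
  have hxA : x ∈ A := interior_subset hx
  have hAx : A ∈ nhds x := mem_interior_iff_mem_nhds.1 hx
  have hyB : f x ∈ B := hfAB ▸ mem_image_of_mem f hxA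
  by_contra hni
  -- local convexity at `f x`
  obtain ⟨V, hVB, hVconv, hVmem⟩ := hBlc (f x) hyB
  obtain ⟨U, hUopen, hyU, hUV⟩ := mem_nhdsWithin.1 hVmem
  -- a point in the interior of `V`
  obtain ⟨z, hzU, hzint⟩ :=
    mem_closure_iff.1 (hBreg hyB) U hUopen hyU
  have hUBint : U ∩ interior B ⊆ interior V :=
    interior_maximal (fun w hw => hUV ⟨hw.1, interior_subset hw.2⟩)
      (hUopen.inter isOpen_interior)
  have hzV : z ∈ interior V := hUBint ⟨hzU, hzint⟩
  have hyV : f x ∈ V := hUV ⟨hyU, hyB⟩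
  -- unique differentiability within `B` at `f x`
  have huniq : UniqueDiffWithinAt ℝ B (f x) :=
    (uniqueDiffWithinAt_convex hVconv ⟨z, hzV⟩ (subset_closure hyV)).mono hVB
  -- derivatives
  have hfd : DifferentiableAt ℝ f x :=
    ((hf x hxA).differentiableWithinAt (by simp)).differentiableAt hAx
  set L := fderiv ℝ f x with hLdef
  have hL : HasFDerivAt f L x := hfd.hasFDerivAt
  have hgd : DifferentiableWithinAt ℝ g B (f x) :=
    (hg (f x) hyB).differentiableWithinAt (by simp)
  set M := fderivWithin ℝ g B (f x) with hMdef
  have hM : HasFDerivWithinAt g M B (f x) := hgd.hasFDerivWithinAt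
  -- `f ∘ g = id` on `B` gives `L ∘ M = id`
  have hgx : g (f x) = x := hgf x hxA
  have hcomp : HasFDerivWithinAt (f ∘ g) (L.comp M) B (f x) := by
    refine HasFDerivAt.comp_hasFDerivWithinAt (f x) ?_ hM
    rw [hgx]; exact hL
  have hcomp' : HasFDerivWithinAt id (L.comp M) B (f x) :=
    hcomp.congr (fun y hy => (hfg y hy).symm) (hfg (f x) hyB).symm
  have hidB : HasFDerivWithinAt id (ContinuousLinearMap.id ℝ E) B (f x) :=
    hasFDerivWithinAt_id (f x) B
  have hLM : L.comp M = ContinuousLinearMap.id ℝ E := huniq.eq hcomp' hidB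
  -- Hahn-Banach separation of `f x` from `interior V`
  obtain ⟨φ, hφ⟩ := geometric_hahn_banach_open_point hVconv.interior isOpen_interior
    (fun h => hni ((interior_mono hVB) h))
  have hφV : ∀ v ∈ V, φ v ≤ φ (f x) := by
    intro v hv
    have hvcl : v ∈ closure (interior V) := aux_convex_subset_closure_interior hVconv hzV hv
    have : closure (interior V) ⊆ {a | φ a ≤ φ (f x)} :=
      closure_minimal (fun a ha => (hφ a ha).le) (isClosed_le φ.continuous continuous_const)
    exact this hvcl
  -- `φ ∘ f` has a local maximum at `x`
  have hmax : IsLocalMax (fun w => φ (f w)) x := by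
    have hfc : ContinuousAt f x := hfd.continuousAt
    have hfU : f ⁻¹' U ∈ nhds x := hfc.preimage_mem_nhds (hUopen.mem_nhds hyU)
    filter_upwards [hAx, hfU] with w hwA hwU
    have hfwB : f w ∈ B := hfAB ▸ mem_image_of_mem f hwA
    exact hφV (f w) (hUV ⟨hwU, hfwB⟩)
  have hder : HasFDerivAt (fun w => φ (f w)) (φ.comp L) x := φ.hasFDerivAt.comp x hL
  have hzero : φ.comp L = 0 := hmax.hasFDerivAt_eq_zero hder
  -- contradiction: `φ (f x - z) > 0` but `φ ∘ L = 0` and `L` is surjective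
  have hsurj : L (M (f x - z)) = f x - z := by
    have := congrArg (fun T : E →L[ℝ] E => T (f x - z)) hLM
    simpa using this
  have h1 : φ (f x - z) = 0 := by
    have h := congrArg (fun T : E →L[ℝ] ℝ => T (M (f x - z))) hzero
    simp only [ContinuousLinearMap.comp_apply, ContinuousLinearMap.zero_apply] at h
    rwa [hsurj] at h
  have h2 : φ z < φ (f x) := hφ z hzV
  rw [map_sub] at h1
  linarith

/-- If `A` and `B` are locally convex subsets with dense interior of a real normed space `E`,
and `f : A → B` is a bijection which together with its inverse `g` is infinitely
differentiable within the respective sets, then `f` maps the interior of `A` onto the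
interior of `B`; equivalently, a point of `A` is a boundary point of `A` if and only if its
image is a boundary point of `B`. -/
theorem image_interior_of_smooth_bijection_locallyConvexSets
    {E : Type*} [NormedAddCommGroup E] [NormedSpace ℝ E]
    (A B : Set E)
    (hAlc : ∀ x ∈ A, ∃ V : Set E, V ⊆ A ∧ Convex ℝ V ∧ V ∈ nhdsWithin x A)
    (hBlc : ∀ y ∈ B, ∃ V : Set E, V ⊆ B ∧ Convex ℝ V ∧ V ∈ nhdsWithin y B)
    (hAreg : A ⊆ closure (interior A)) (hBreg : B ⊆ closure (interior B))
    (f g : E → E)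
    (hf : ∀ x ∈ A, ContDiffWithinAt ℝ (⊤ : ℕ∞) f A x)
    (hg : ∀ y ∈ B, ContDiffWithinAt ℝ (⊤ : ℕ∞) g B y)
    (hfAB : f '' A = B)
    (hgf : ∀ x ∈ A, g (f x) = x) (hfg : ∀ y ∈ B, f (g y) = y) :
    f '' interior A = interior B ∧
      ∀ x ∈ A, (x ∈ frontier A ↔ f x ∈ frontier B) := by
  have hgBA : g '' B = A := by
    apply Subset.antisymm
    · rintro _ ⟨y, hy, rfl⟩
      obtain ⟨x, hx, rfl⟩ : y ∈ f '' A := hfAB ▸ hy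
      rw [hgf x hx]; exact hx
    · intro x hx
      have : f x ∈ B := hfAB ▸ mem_image_of_mem f hx
      exact ⟨f x, this, hgf x hx⟩
  have h₁ : f '' interior A ⊆ interior B :=
    aux_image_interior_subset A B hBlc hBreg f g hf hg hfAB hgf hfg
  have h₂ : g '' interior B ⊆ interior A :=
    aux_image_interior_subset B A hAlc hAreg g f hg hf hgBA hfg hgf
  have himg : f '' interior A = interior B := by
    apply Subset.antisymm h₁
    intro y hy
    have hyB : y ∈ B := interior_subset hy
    have : g y ∈ interior A := h₂ (mem_image_of_mem g hy)
    exact ⟨g y, this, hfg y hyB⟩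
  refine ⟨himg, fun x hxA => ?_⟩
  have hyB : f x ∈ B := hfAB ▸ mem_image_of_mem f hxA
  have hxint : x ∈ interior A ↔ f x ∈ interior B := by
    constructor
    · intro h; exact himg ▸ mem_image_of_mem f h
    · intro h
      obtain ⟨x', hx', hfx'⟩ : f x ∈ f '' interior A := himg ▸ h
      have : x' = x := by
        have h1 := hgf x' (interior_subset hx')
        have h2 := hgf x hxA
        rw [hfx'] at h1; rw [h2] at h1; exact h1.symm
      exact this ▸ hx'
  have hxf : x ∈ frontier A ↔ x ∉ interior A := by
    constructor
    · intro h; exact h.2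
    · intro h; exact ⟨subset_closure hxA, h⟩
  have hyf : f x ∈ frontier B ↔ f x ∉ interior B := by
    constructor
    · intro h; exact h.2
    · intro h; exact ⟨subset_closure hyB, h⟩
  rw [hxf, hyf]
  exact not_congr hxint
end
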